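/- Exchanging a spoke e with its rim edge φ₋(e) in a coloring of a wheel graph does not reverse the orientation of the coloring; consequently, if colorings P₁ and P₂ of a wheel have different orientations, any sequence of feasible symmetric exchanges transforming P₁ into P₂ must pass through a coloring with exactly two intervals. -/

import Mathlib

open Set symmDiff

/-- The wheel graph whose outer cycle has vertex set `ZMod m` (`m ≥ 3`): the center `none`
is joined to every outer vertex, and outer vertices `some i`, `some (i+1)` are adjacent. -/
def wheelGraph (m : ℕ) : SimpleGraph (Option (ZMod m)) where
  Adj u v := u ≠ v ∧ (u = none ∨ v = none ∨
    ∃ i : ZMod m, (u = some i ∧ v = some (i + 1)) ∨ (v = some i ∧ u = some (i + 1)))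
  symm := by
    refine ⟨?_⟩
    rintro u v ⟨hne, h⟩
    refine ⟨hne.symm, ?_⟩
    rcases h with h | h | ⟨i, h | h⟩
    · exact Or.inr (Or.inl h)
    · exact Or.inl h
    · exact Or.inr (Or.inr ⟨i, Or.inr h⟩)
    · exact Or.inr (Or.inr ⟨i, Or.inl h⟩)
  loopless := ⟨fun u h => h.1 rfl⟩

/-- The spoke joining the center to the outer vertex `i`. -/
def spokeE (m : ℕ) (i : ZMod m) : Sym2 (Option (ZMod m)) := s(none, some i)

/-- The rim edge joining the outer vertices `i` and `i + 1`. -/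
def rimE (m : ℕ) (i : ZMod m) : Sym2 (Option (ZMod m)) := s(some i, some (i + 1))

/-- `T` is the edge set of a spanning tree of the wheel: a set of wheel edges whose
associated graph is connected and acyclic. -/
def IsTreeSet (m : ℕ) (T : Set (Sym2 (Option (ZMod m)))) : Prop :=
  T ⊆ (wheelGraph m).edgeSet ∧ (SimpleGraph.fromEdgeSet T).Connected ∧
    (SimpleGraph.fromEdgeSet T).IsAcyclic

/-- A coloring of the wheel: a partition of its edge set into two spanning trees. -/
def IsWheelColoring (m : ℕ)
    (P : Set (Sym2 (Option (ZMod m))) × Set (Sym2 (Option (ZMod m)))) : Prop :=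
  IsTreeSet m P.1 ∧ IsTreeSet m P.2 ∧ Disjoint P.1 P.2 ∧
    P.1 ∪ P.2 = (wheelGraph m).edgeSet

/-- `WExchSeq m P L Q` : the list `L` of pairs `(e, f)` records a sequence of feasible
symmetric exchanges (each swapping a red edge `e` with a blue edge `f`, both color classes
remaining spanning trees) transforming the coloring `P` into `Q`. -/
def WExchSeq (m : ℕ) :
    Set (Sym2 (Option (ZMod m))) × Set (Sym2 (Option (ZMod m))) →
    List (Sym2 (Option (ZMod m)) × Sym2 (Option (ZMod m))) →
    Set (Sym2 (Option (ZMod m))) × Set (Sym2 (Option (ZMod m))) → Prop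
  | P, [], Q => P = Q
  | P, (e, f) :: L, Q =>
      ∃ P' : Set (Sym2 (Option (ZMod m))) × Set (Sym2 (Option (ZMod m))),
        e ∈ P.1 ∧ f ∈ P.2 ∧
        P'.1 = insert f (P.1 \ {e}) ∧ P'.2 = insert e (P.2 \ {f}) ∧
        IsWheelColoring m P' ∧ WExchSeq m P' L Q

/-- A coloring has positive orientation if every boundary rim edge (a rim edge whose two
neighbouring spokes have different colors) has the color of the spoke preceding it in the
counterclockwise (positive) direction. -/
def PositiveOrientation (m : ℕ)
    (P : Set (Sym2 (Option (ZMod m))) × Set (Sym2 (Option (ZMod m)))) : Prop :=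
  ∀ i : ZMod m, (spokeE m i ∈ P.1 ↔ spokeE m (i + 1) ∈ P.1) ∨
    (rimE m i ∈ P.1 ↔ spokeE m i ∈ P.1)

/-- A coloring has negative orientation if every boundary rim edge has the color of the
spoke following it in the positive direction. -/
def NegativeOrientation (m : ℕ)
    (P : Set (Sym2 (Option (ZMod m))) × Set (Sym2 (Option (ZMod m)))) : Prop :=
  ∀ i : ZMod m, (spokeE m i ∈ P.1 ↔ spokeE m (i + 1) ∈ P.1) ∨
    (rimE m i ∈ P.1 ↔ spokeE m (i + 1) ∈ P.1)

/-- Two colorings have the same orientation. -/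
def SameOrientation (m : ℕ)
    (P Q : Set (Sym2 (Option (ZMod m))) × Set (Sym2 (Option (ZMod m)))) : Prop :=
  (PositiveOrientation m P ∧ PositiveOrientation m Q) ∨
    (NegativeOrientation m P ∧ NegativeOrientation m Q)

/-- Two colorings have different orientations. -/
def DifferentOrientation (m : ℕ)
    (P Q : Set (Sym2 (Option (ZMod m))) × Set (Sym2 (Option (ZMod m)))) : Prop :=
  (PositiveOrientation m P ∧ NegativeOrientation m Q) ∨
    (NegativeOrientation m P ∧ PositiveOrientation m Q)

/-- The number of intervals (maximal runs of consecutive same-colored spokes) of a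
coloring: the number of boundaries, i.e. of indices `i` such that the spokes `i` and
`i + 1` have different colors. -/
noncomputable def intervalCount (m : ℕ)
    (P : Set (Sym2 (Option (ZMod m))) × Set (Sym2 (Option (ZMod m)))) : ℕ :=
  {i : ZMod m | ¬ (spokeE m i ∈ P.1 ↔ spokeE m (i + 1) ∈ P.1)}.ncard

/-- The total weight of a sequence of symmetric exchanges. -/
def wSeqWeight (m : ℕ) (w : Sym2 (Option (ZMod m)) → NNReal)
    (L : List (Sym2 (Option (ZMod m)) × Sym2 (Option (ZMod m)))) : NNReal :=
  (L.map fun p => w p.1 + w p.2).sum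

/-- The number of times an exchange sequence uses the edge `a`. -/
def wUsesCount (m : ℕ) (L : List (Sym2 (Option (ZMod m)) × Sym2 (Option (ZMod m))))
    (a : Sym2 (Option (ZMod m))) : ℕ :=
  (L.map Prod.fst).count a + (L.map Prod.snd).count a

/-- A single feasible symmetric exchange step between colorings of the wheel. -/
def WStep (m : ℕ)
    (P Q : Set (Sym2 (Option (ZMod m))) × Set (Sym2 (Option (ZMod m)))) : Prop :=
  ∃ e f, e ∈ P.1 ∧ f ∈ P.2 ∧ Q.1 = insert f (P.1 \ {e}) ∧ Q.2 = insert e (P.2 \ {f}) ∧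
    IsWheelColoring m Q

/-!
At a boundary between two intervals the rim edge has the colour of one of its two spokes. Across a
red interval the two flanking rims are never both blue (with the interval's inner rims and the two
blue flanking spokes they would close a blue cycle through the centre) and never both red (then no
blue edge leaves the interval's outer vertices, so the blue tree cannot reach them from the
centre). This says exactly that at both ends of the interval the rim takes the colour of the spoke
on the same side, so all boundaries do so on the same side, and that side is the orientation.

An exchange `P.1 ↦ P.1 ∆ S` that leaves some boundary, its two spokes and its rim untouched
therefore preserves the orientation. The boundaries of `P.1 ∆ S` are the symmetric difference of
those of `P.1` and those of `S`, so the latter two never coincide: the new coloring would have a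
colour without spokes. A spoke exchanged with an adjacent rim edge touches only the two boundaries
of that spoke; an arbitrary exchange touches at most four boundaries, and exactly four only if it
exchanges two spokes whose pairs of boundaries are disjoint. In both cases, if every boundary of
`P.1` were touched, these would be precisely the boundaries of `S`.
-/

section Edges

variable {m : ℕ}

abbrev WheelEdge (m : ℕ) := Sym2 (Option (ZMod m))

lemma add_natCast_ne_self {t : ℕ} (h0 : 0 < t) (ht : t < m) (i : ZMod m) : i + t ≠ i := by
  rw [Ne, add_eq_left, ZMod.natCast_eq_zero_iff]
  exact Nat.not_dvd_of_pos_of_lt h0 ht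

lemma add_one_ne_self_of_one_lt (hm : 1 < m) (i : ZMod m) : i + 1 ≠ i := by
  simpa using add_natCast_ne_self (t := 1) one_pos hm i

lemma spokeE_mem_edgeSet (i : ZMod m) : spokeE m i ∈ (wheelGraph m).edgeSet :=
  (wheelGraph m).mem_edgeSet.mpr ⟨by simp, Or.inl rfl⟩

lemma rimE_mem_edgeSet (hm : 3 ≤ m) (i : ZMod m) : rimE m i ∈ (wheelGraph m).edgeSet :=
  (wheelGraph m).mem_edgeSet.mpr
    ⟨by simpa using (add_one_ne_self_of_one_lt (by omega) i).symm,
      Or.inr (Or.inr ⟨i, Or.inl ⟨rfl, rfl⟩⟩)⟩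

lemma spokeE_injective : Function.Injective (spokeE m) := fun i j h => by
  simpa [spokeE] using h

lemma spokeE_ne_rimE (i j : ZMod m) : spokeE m i ≠ rimE m j := by
  simp [spokeE, rimE]

lemma rimE_injective (hm : 3 ≤ m) : Function.Injective (rimE m) := by
  intro i j h
  rcases Sym2.eq_iff.mp h with ⟨h1, -⟩ | ⟨h1, h2⟩
  · exact Option.some_injective _ h1
  · simp only [Option.some.injEq] at h1 h2
    refine absurd ?_ (add_natCast_ne_self (t := 2) two_pos (by omega) j)
    push_cast
    linear_combination h2 - h1

lemma wheelGraph_adj_some {a : ZMod m} {v : Option (ZMod m)} (h : (wheelGraph m).Adj (some a) v) :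
    v = none ∨ v = some (a + 1) ∨ v = some (a - 1) := by
  obtain ⟨-, h | h | ⟨i, ⟨h1, h2⟩ | ⟨h1, h2⟩⟩⟩ := h
  · simp at h
  · exact Or.inl h
  · simp only [Option.some.injEq] at h1
    exact Or.inr (Or.inl (h1 ▸ h2))
  · simp only [Option.some.injEq] at h2
    exact Or.inr (Or.inr (by rw [h1, h2, add_sub_cancel_right]))

lemma exists_eq_spokeE_or_rimE {e : WheelEdge m} (he : e ∈ (wheelGraph m).edgeSet) :
    (∃ a, e = spokeE m a) ∨ ∃ a, e = rimE m a := by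
  induction e using Sym2.ind with
  | h u v =>
    rw [SimpleGraph.mem_edgeSet] at he
    cases u with
    | none =>
      cases v with
      | none => exact (he.ne rfl).elim
      | some b => exact Or.inl ⟨b, rfl⟩
    | some a =>
      rcases wheelGraph_adj_some he with rfl | rfl | rfl
      · exact Or.inl ⟨a, Sym2.eq_swap⟩
      · exact Or.inr ⟨a, rfl⟩
      · exact Or.inr ⟨a - 1, by rw [rimE, sub_add_cancel, Sym2.eq_swap]⟩

end Edges

section Boundaries

variable {m : ℕ}

def boundaries (m : ℕ) (A : Set (WheelEdge m)) : Set (ZMod m) :=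
  {i | ¬ (spokeE m i ∈ A ↔ spokeE m (i + 1) ∈ A)}

lemma intervalCount_eq_ncard_boundaries (P : Set (WheelEdge m) × Set (WheelEdge m)) :
    intervalCount m P = (boundaries m P.1).ncard :=
  rfl

lemma boundaries_symmDiff (A S : Set (WheelEdge m)) :
    boundaries m (A ∆ S) = boundaries m A ∆ boundaries m S := by
  ext i
  simp only [boundaries, Set.mem_symmDiff, Set.mem_ofPred_eq]
  tauto

lemma boundaries_insert_rimE (j : ZMod m) (S : Set (WheelEdge m)) :
    boundaries m (insert (rimE m j) S) = boundaries m S := by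
  simp [boundaries, spokeE_ne_rimE]

lemma boundaries_singleton_spokeE (hm : 3 ≤ m) (i : ZMod m) :
    boundaries m {spokeE m i} = {i - 1, i} := by
  ext k
  simp only [boundaries, Set.mem_singleton_iff, spokeE_injective.eq_iff, Set.mem_ofPred_eq,
    Set.mem_insert_iff, eq_sub_iff_add_eq]
  have := add_one_ne_self_of_one_lt (by omega) k
  constructor
  · tauto
  · rintro (h | h) <;> subst h <;> tauto

lemma spokeE_mem_iff_of_forall_notMem_boundaries {A : Set (WheelEdge m)} {i : ZMod m} {a b : ℕ}
    (hab : a ≤ b) (h : ∀ s, a ≤ s → s < b → i + s ∉ boundaries m A) :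
    spokeE m (i + a) ∈ A ↔ spokeE m (i + b) ∈ A := by
  induction b, hab using Nat.le_induction with
  | base => rfl
  | succ b hab ih =>
    have hb := h b hab (Nat.lt_succ_self b)
    simp only [boundaries, Set.mem_ofPred_eq, not_not] at hb
    rw [ih fun s h1 h2 => h s h1 (by omega), hb, Nat.cast_succ, add_assoc]

lemma even_ncard_boundaries [NeZero m] (A : Set (WheelEdge m)) :
    Even (boundaries m A).ncard := by
  classical
  let c : ZMod m → ZMod 2 := fun i => if spokeE m i ∈ A then 1 else 0
  have hcard : ((boundaries m A).ncard : ZMod 2) = ∑ i, (c i + c (i + 1)) := by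
    rw [Set.ncard_eq_toFinset_card', boundaries, Set.toFinset_ofPred, Finset.card_filter]
    push_cast
    refine Finset.sum_congr rfl fun i _ => ?_
    by_cases h1 : spokeE m i ∈ A <;> by_cases h2 : spokeE m (i + 1) ∈ A <;>
      simp [c, h1, h2, CharTwo.add_self_eq_zero]
  rw [← ZMod.natCast_eq_zero_iff_even, hcard, Finset.sum_add_distrib,
    Fintype.sum_equiv (Equiv.addRight 1) (fun i => c (i + 1)) c (fun _ => rfl),
    CharTwo.add_self_eq_zero]

end Boundaries

section Colorings

variable {m : ℕ} {P : Set (WheelEdge m) × Set (WheelEdge m)}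

lemma IsTreeSet.exists_spokeE_mem {T : Set (WheelEdge m)} (hT : IsTreeSet m T) :
    ∃ a, spokeE m a ∈ T := by
  obtain ⟨w⟩ := hT.2.1.preconnected none (some 0)
  cases w with
  | cons h _ =>
    rename_i v
    obtain ⟨hmem, hne⟩ := (SimpleGraph.fromEdgeSet_adj _).mp h
    obtain ⟨a, rfl⟩ := Option.ne_none_iff_exists'.mp hne.symm
    exact ⟨a, hmem⟩

lemma IsWheelColoring.swap (hP : IsWheelColoring m P) : IsWheelColoring m P.swap :=
  ⟨hP.2.1, hP.1, hP.2.2.1.symm,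
    by rw [Prod.fst_swap, Prod.snd_swap, Set.union_comm]; exact hP.2.2.2⟩

lemma IsWheelColoring.mem_snd_iff (hP : IsWheelColoring m P) {e : WheelEdge m}
    (he : e ∈ (wheelGraph m).edgeSet) : e ∈ P.2 ↔ e ∉ P.1 := by
  refine ⟨fun h2 h1 => Set.disjoint_left.mp hP.2.2.1 h1 h2, fun h1 => ?_⟩
  rw [← hP.2.2.2] at he
  exact he.resolve_left h1

lemma IsWheelColoring.boundaries_snd (hP : IsWheelColoring m P) :
    boundaries m P.2 = boundaries m P.1 := by
  ext i
  simp only [boundaries, Set.mem_ofPred_eq, hP.mem_snd_iff (spokeE_mem_edgeSet _)]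
  tauto

lemma IsWheelColoring.boundaries_nonempty [NeZero m] (hP : IsWheelColoring m P) :
    (boundaries m P.1).Nonempty := by
  obtain ⟨a, ha⟩ := hP.1.exists_spokeE_mem
  obtain ⟨b, hb⟩ := hP.2.1.exists_spokeE_mem
  rw [hP.mem_snd_iff (spokeE_mem_edgeSet b)] at hb
  by_contra hempty
  rw [Set.not_nonempty_iff_eq_empty] at hempty
  have := spokeE_mem_iff_of_forall_notMem_boundaries (A := P.1) (i := a)
    (Nat.zero_le (b - a).val) fun s _ _ => by simp [hempty]
  simp only [Nat.cast_zero, add_zero, ZMod.natCast_zmod_val, add_sub_cancel] at this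
  exact hb (this.mp ha)

lemma IsWheelColoring.two_le_intervalCount [NeZero m] (hP : IsWheelColoring m P) :
    2 ≤ intervalCount m P := by
  obtain ⟨c, hc⟩ := even_ncard_boundaries (m := m) P.1
  have := (Set.ncard_pos (Set.toFinite _)).mpr hP.boundaries_nonempty
  rw [intervalCount_eq_ncard_boundaries]
  omega

end Colorings

section Trees

open SimpleGraph

variable {m : ℕ}

lemma reachable_fromEdgeSet_of_mem {V : Type*} {T : Set (Sym2 V)} {u v : V} (h : s(u, v) ∈ T) :
    (fromEdgeSet T).Reachable u v := by
  by_cases huv : u = v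
  · exact huv ▸ Reachable.refl u
  · exact ((fromEdgeSet_adj _).mpr ⟨h, huv⟩).reachable

lemma not_reachable_fromEdgeSet_sdiff {V : Type*} {T : Set (Sym2 V)} {u v : V}
    (hT : (fromEdgeSet T).IsAcyclic) (h : s(u, v) ∈ T) (huv : u ≠ v) :
    ¬ (fromEdgeSet (T \ {s(u, v)})).Reachable u v := by
  have := isAcyclic_iff_forall_adj_isBridge.mp hT ((fromEdgeSet_adj _).mpr ⟨h, huv⟩)
  rwa [isBridge_iff, deleteEdges_fromEdgeSet] at this

lemma reachable_some_add_of_rimE_mem {T : Set (WheelEdge m)} {i : ZMod m} {t : ℕ}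
    (h : ∀ s < t, rimE m (i + s) ∈ T) : (fromEdgeSet T).Reachable (some i) (some (i + t)) := by
  induction t with
  | zero => simp
  | succ t ih =>
    refine (ih fun s hs => h s (by omega)).trans ?_
    rw [Nat.cast_succ, ← add_assoc]
    exact reachable_fromEdgeSet_of_mem (h t (by omega))

lemma rimE_notMem_of_spokeE_mem (hm : 3 ≤ m) {T : Set (WheelEdge m)}
    (hT : (fromEdgeSet T).IsAcyclic) {i : ZMod m} (h : spokeE m i ∈ T)
    (h' : spokeE m (i + 1) ∈ T) : rimE m i ∉ T := by
  intro hr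
  refine not_reachable_fromEdgeSet_sdiff hT h (by simp) ?_
  have h₁ : spokeE m (i + 1) ∈ T \ {spokeE m i} :=
    ⟨h', fun e => add_one_ne_self_of_one_lt (by omega) i (spokeE_injective e)⟩
  have h₂ : rimE m i ∈ T \ {spokeE m i} := ⟨hr, (spokeE_ne_rimE i i).symm⟩
  exact (reachable_fromEdgeSet_of_mem h₁).trans (reachable_fromEdgeSet_of_mem h₂).symm

end Trees

section Intervals

open SimpleGraph

variable {m : ℕ} {P : Set (WheelEdge m) × Set (WheelEdge m)} {i : ZMod m} {n : ℕ}

lemma rimE_mem_snd_of_interval (hm : 3 ≤ m) (hP : IsWheelColoring m P)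
    (hin : ∀ t, 0 < t → t ≤ n → spokeE m (i + t) ∈ P.1) {t : ℕ} (ht0 : 0 < t)
    (htn : t < n) : rimE m (i + t) ∈ P.2 := by
  refine (hP.mem_snd_iff (rimE_mem_edgeSet hm _)).mpr
    (rimE_notMem_of_spokeE_mem hm hP.1.2.2 (hin t ht0 htn.le) ?_)
  simpa [add_assoc] using hin (t + 1) (by omega) htn

lemma not_rimE_mem_snd_and_rimE_mem_snd_of_interval (hm : 3 ≤ m) (hP : IsWheelColoring m P)
    (hn : n < m) (hin : ∀ t, 0 < t → t ≤ n → spokeE m (i + t) ∈ P.1)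
    (hi : spokeE m i ∈ P.2) (hj : spokeE m (i + n + 1) ∈ P.2) :
    ¬ (rimE m i ∈ P.2 ∧ rimE m (i + n) ∈ P.2) := by
  rintro ⟨hl, hr⟩
  refine not_reachable_fromEdgeSet_sdiff hP.2.1.2.2 hl
    (by simpa using (add_one_ne_self_of_one_lt (by omega) i).symm) ?_
  -- the way back from `i + 1` to `i` along the interval's rims and through the centre
  have hrims : ∀ s < n, rimE m (i + 1 + s) ∈ P.2 \ {rimE m i} := by
    intro s hs
    have hne : i + ((s + 1 : ℕ) : ZMod m) ≠ i := add_natCast_ne_self (by omega) (by omega) i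
    refine ⟨?_, fun h => hne (by push_cast; linear_combination rimE_injective hm h)⟩
    rcases Nat.lt_or_ge (s + 1) n with h | h
    · simpa [add_assoc, add_comm (1 : ZMod m)] using
        rimE_mem_snd_of_interval hm hP hin (by omega) h
    · rwa [show s = n - 1 by omega, add_assoc, ← Nat.cast_one, ← Nat.cast_add,
        Nat.add_sub_cancel' (by omega)]
  have hspoke : ∀ a, spokeE m a ∈ P.2 → spokeE m a ∈ P.2 \ {rimE m i} :=
    fun a h => ⟨h, spokeE_ne_rimE a i⟩
  have hj' := reachable_fromEdgeSet_of_mem (hspoke _ hj)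
  rw [show i + n + 1 = i + 1 + n by ring] at hj'
  exact ((reachable_some_add_of_rimE_mem hrims).trans (hj'.symm.trans
    (reachable_fromEdgeSet_of_mem (hspoke _ hi)))).symm

lemma not_rimE_mem_fst_and_rimE_mem_fst_of_interval (hP : IsWheelColoring m P) (hn0 : 0 < n)
    (hin : ∀ t, 0 < t → t ≤ n → spokeE m (i + t) ∈ P.1) :
    ¬ (rimE m i ∈ P.1 ∧ rimE m (i + n) ∈ P.1) := by
  rintro ⟨hl, hr⟩
  have hnot : ∀ e ∈ P.1, e ∉ P.2 := fun e h₁ h₂ => Set.disjoint_left.mp hP.2.2.1 h₁ h₂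
  -- no blue edge leaves the outer vertices of the interval
  let S : Set (Option (ZMod m)) := {v | ∃ t, 0 < t ∧ t ≤ n ∧ v = some (i + t)}
  obtain ⟨w⟩ := hP.2.1.2.1.preconnected (some (i + 1)) none
  obtain ⟨d, -, ⟨t, ht0, htn, hd⟩, hout⟩ :=
    w.exists_boundary_dart S ⟨1, one_pos, hn0, by simp⟩ (by simp [S])
  have hmem : s(some (i + t), d.snd) ∈ P.2 := hd ▸ ((fromEdgeSet_adj _).mp d.adj).1
  rcases wheelGraph_adj_some ((wheelGraph m).mem_edgeSet.mp (hP.2.1.1 hmem)) with hv | hv | hv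
  · rw [hv, Sym2.eq_swap] at hmem
    exact hnot _ (hin t ht0 htn) hmem
  · rcases Nat.lt_or_ge t n with h | h
    · exact hout ⟨t + 1, by omega, h, by rw [hv]; push_cast; ring_nf⟩
    · rw [hv, show t = n by omega] at hmem
      exact hnot _ hr hmem
  · rcases Nat.lt_or_ge 1 t with h | h
    · exact hout ⟨t - 1, by omega, by omega, by rw [hv, Nat.cast_sub h.le]; ring_nf⟩
    · rw [hv, show t = 1 by omega, Sym2.eq_swap] at hmem
      exact hnot _ hl (by simpa [rimE] using hmem)

lemma rimE_mem_snd_iff_of_interval (hm : 3 ≤ m) (hP : IsWheelColoring m P) (hn0 : 0 < n)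
    (hn : n < m) (hin : ∀ t, 0 < t → t ≤ n → spokeE m (i + t) ∈ P.1)
    (hi : spokeE m i ∈ P.2) (hj : spokeE m (i + n + 1) ∈ P.2) :
    rimE m i ∈ P.2 ↔ rimE m (i + n) ∈ P.1 := by
  have := not_rimE_mem_snd_and_rimE_mem_snd_of_interval hm hP hn hin hi hj
  have := not_rimE_mem_fst_and_rimE_mem_fst_of_interval hP hn0 hin
  have := hP.mem_snd_iff (rimE_mem_edgeSet hm i)
  have := hP.mem_snd_iff (rimE_mem_edgeSet hm (i + n))
  tauto

end Intervals

section Orientation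

variable {m : ℕ} {P Q : Set (WheelEdge m) × Set (WheelEdge m)}

def RimAgreesWithSpoke (m : ℕ) (A : Set (WheelEdge m)) (i : ZMod m) : Prop :=
  rimE m i ∈ A ↔ spokeE m i ∈ A

lemma positiveOrientation_iff :
    PositiveOrientation m P ↔ ∀ i ∈ boundaries m P.1, RimAgreesWithSpoke m P.1 i :=
  forall_congr' fun _ => by rw [boundaries, Set.mem_ofPred_eq, RimAgreesWithSpoke]; tauto

lemma negativeOrientation_iff :
    NegativeOrientation m P ↔ ∀ i ∈ boundaries m P.1, ¬ RimAgreesWithSpoke m P.1 i :=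
  forall_congr' fun _ => by rw [boundaries, Set.mem_ofPred_eq, RimAgreesWithSpoke]; tauto

lemma IsWheelColoring.rimAgreesWithSpoke_snd (hm : 3 ≤ m) (hP : IsWheelColoring m P)
    (i : ZMod m) : RimAgreesWithSpoke m P.2 i ↔ RimAgreesWithSpoke m P.1 i := by
  rw [RimAgreesWithSpoke, RimAgreesWithSpoke, hP.mem_snd_iff (rimE_mem_edgeSet hm i),
    hP.mem_snd_iff (spokeE_mem_edgeSet i), not_iff_not]

lemma rimAgreesWithSpoke_iff_of_interval (hm : 3 ≤ m) (hP : IsWheelColoring m P) {i : ZMod m}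
    {n : ℕ} (hn0 : 0 < n) (hn : n < m)
    (hin : ∀ t, 0 < t → t ≤ n → spokeE m (i + t) ∈ P.1) (hi : spokeE m i ∈ P.2)
    (hj : spokeE m (i + n + 1) ∈ P.2) :
    RimAgreesWithSpoke m P.1 i ↔ RimAgreesWithSpoke m P.1 (i + n) := by
  have := rimE_mem_snd_iff_of_interval hm hP hn0 hn hin hi hj
  have := hin n hn0 le_rfl
  have := hP.mem_snd_iff (spokeE_mem_edgeSet i)
  have := hP.mem_snd_iff (rimE_mem_edgeSet hm i)
  rw [RimAgreesWithSpoke, RimAgreesWithSpoke]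
  tauto

lemma rimAgreesWithSpoke_iff_of_consecutive (hm : 3 ≤ m) (hP : IsWheelColoring m P)
    {i : ZMod m} {n : ℕ} (hn0 : 0 < n) (hn : n < m) (hi : i ∈ boundaries m P.1)
    (hin : i + n ∈ boundaries m P.1)
    (hmid : ∀ t, 0 < t → t < n → i + t ∉ boundaries m P.1) :
    RimAgreesWithSpoke m P.1 i ↔ RimAgreesWithSpoke m P.1 (i + n) := by
  wlog h₁ : spokeE m (i + 1) ∈ P.1 generalizing P
  · have hbd : boundaries m P.swap.1 = boundaries m P.1 := hP.boundaries_snd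
    have := this hP.swap (hbd ▸ hi) (hbd ▸ hin) (hbd ▸ hmid)
      ((hP.mem_snd_iff (spokeE_mem_edgeSet _)).mpr h₁)
    simpa only [Prod.fst_swap, hP.rimAgreesWithSpoke_snd hm] using this
  have hin' : ∀ t, 0 < t → t ≤ n → spokeE m (i + t) ∈ P.1 := fun t ht0 htn => by
    simpa using (spokeE_mem_iff_of_forall_notMem_boundaries ht0 fun s hs1 hs2 =>
      hmid s hs1 (by omega)).mp (by simpa using h₁)
  have hsnd := fun a => hP.mem_snd_iff (spokeE_mem_edgeSet a)
  simp only [boundaries, Set.mem_ofPred_eq] at hi hin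
  refine rimAgreesWithSpoke_iff_of_interval hm hP hn0 hn hin' ?_ ?_
  · rw [hsnd]; tauto
  · have := hin' n hn0 le_rfl
    rw [hsnd]; tauto

lemma rimAgreesWithSpoke_iff_of_mem_boundaries (hm : 3 ≤ m) (hP : IsWheelColoring m P)
    {i j : ZMod m} (hi : i ∈ boundaries m P.1) (hj : j ∈ boundaries m P.1) :
    RimAgreesWithSpoke m P.1 i ↔ RimAgreesWithSpoke m P.1 j := by
  have : NeZero m := ⟨by omega⟩
  suffices h : ∀ d < m, ∀ i, i ∈ boundaries m P.1 → i + d ∈ boundaries m P.1 →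
      (RimAgreesWithSpoke m P.1 i ↔ RimAgreesWithSpoke m P.1 (i + d)) by
    simpa using h (j - i).val (ZMod.val_lt _) i hi (by simpa using hj)
  intro d
  induction d using Nat.strong_induction_on with
  | _ d ih =>
    intro hd i hi hid
    rcases Nat.eq_zero_or_pos d with rfl | hd0
    · simp
    classical
    have hex : ∃ n : ℕ, 0 < n ∧ i + n ∈ boundaries m P.1 := ⟨d, hd0, hid⟩
    obtain ⟨hn0, hn⟩ := Nat.find_spec hex
    have hnd : Nat.find hex ≤ d := Nat.find_min' hex ⟨hd0, hid⟩
    have hsplit :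
        i + (d : ZMod m) = i + (Nat.find hex : ℕ) + ((d - Nat.find hex : ℕ) : ZMod m) := by
      rw [add_assoc, ← Nat.cast_add, Nat.add_sub_cancel' hnd]
    refine (rimAgreesWithSpoke_iff_of_consecutive hm hP hn0 (by omega) hi hn
      fun t ht0 htn h => Nat.find_min hex htn ⟨ht0, h⟩).trans ?_
    rw [hsplit] at hid ⊢
    exact ih _ (by omega) (by omega) _ hn hid

lemma positiveOrientation_iff_of_mem_boundaries (hm : 3 ≤ m) (hP : IsWheelColoring m P)
    {k : ZMod m} (hk : k ∈ boundaries m P.1) :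
    PositiveOrientation m P ↔ RimAgreesWithSpoke m P.1 k := by
  rw [positiveOrientation_iff]
  exact ⟨fun h => h k hk,
    fun h i hi => (rimAgreesWithSpoke_iff_of_mem_boundaries hm hP hi hk).mpr h⟩

lemma negativeOrientation_iff_of_mem_boundaries (hm : 3 ≤ m) (hP : IsWheelColoring m P)
    {k : ZMod m} (hk : k ∈ boundaries m P.1) :
    NegativeOrientation m P ↔ ¬ RimAgreesWithSpoke m P.1 k := by
  rw [negativeOrientation_iff]
  exact ⟨fun h => h k hk,
    fun h i hi => mt (rimAgreesWithSpoke_iff_of_mem_boundaries hm hP hi hk).mp h⟩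

lemma IsWheelColoring.not_positiveOrientation_and_negativeOrientation (hm : 3 ≤ m)
    (hP : IsWheelColoring m P) : ¬ (PositiveOrientation m P ∧ NegativeOrientation m P) := by
  have : NeZero m := ⟨by omega⟩
  obtain ⟨k, hk⟩ := hP.boundaries_nonempty
  rw [positiveOrientation_iff_of_mem_boundaries hm hP hk,
    negativeOrientation_iff_of_mem_boundaries hm hP hk]
  exact fun h => h.2 h.1

end Orientation

section Exchanges

variable {m : ℕ} {P Q : Set (WheelEdge m) × Set (WheelEdge m)}

def localEdges (m : ℕ) (k : ZMod m) : Set (WheelEdge m) :=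
  {spokeE m k, spokeE m (k + 1), rimE m k}

def touchedIndices (m : ℕ) (e : WheelEdge m) : Set (ZMod m) :=
  {k | e ∈ localEdges m k}

lemma touchedIndices_spokeE (a : ZMod m) : touchedIndices m (spokeE m a) = {a - 1, a} := by
  ext k
  simp only [touchedIndices, localEdges, Set.mem_ofPred_eq, Set.mem_insert_iff,
    Set.mem_singleton_iff, spokeE_injective.eq_iff, spokeE_ne_rimE, eq_sub_iff_add_eq]
  tauto

lemma touchedIndices_rimE (hm : 3 ≤ m) (a : ZMod m) : touchedIndices m (rimE m a) = {a} := by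
  ext k
  simp only [touchedIndices, localEdges, Set.mem_ofPred_eq, Set.mem_insert_iff,
    Set.mem_singleton_iff, (rimE_injective hm).eq_iff, (spokeE_ne_rimE _ _).symm, false_or]
  exact eq_comm

lemma boundaries_subset_touchedIndices {A : Set (WheelEdge m)} {e f : WheelEdge m}
    (h : ¬ ∃ k ∈ boundaries m A, Disjoint (localEdges m k) {e, f}) :
    boundaries m A ⊆ touchedIndices m e ∪ touchedIndices m f := by
  intro k hk
  have := fun hd => h ⟨k, hk, hd⟩
  simp only [Set.disjoint_insert_right, Set.disjoint_singleton_right] at this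
  by_contra hc
  exact this (not_or.mp hc)

lemma boundaries_ne_of_symmDiff [NeZero m] (hQ : IsWheelColoring m Q) {S : Set (WheelEdge m)}
    (hQ1 : Q.1 = P.1 ∆ S) : boundaries m P.1 ≠ boundaries m S := by
  intro h
  have := hQ.boundaries_nonempty
  rw [hQ1, boundaries_symmDiff, h, symmDiff_self] at this
  exact Set.not_nonempty_empty this

lemma orientation_iff_of_disjoint_localEdges (hm : 3 ≤ m) (hP : IsWheelColoring m P)
    (hQ : IsWheelColoring m Q) {S : Set (WheelEdge m)} (hQ1 : Q.1 = P.1 ∆ S) {k : ZMod m}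
    (hk : k ∈ boundaries m P.1) (hS : Disjoint (localEdges m k) S) :
    (PositiveOrientation m P ↔ PositiveOrientation m Q) ∧
      (NegativeOrientation m P ↔ NegativeOrientation m Q) := by
  have hsame : ∀ e ∈ localEdges m k, (e ∈ Q.1 ↔ e ∈ P.1) := fun e he => by
    have := Set.disjoint_left.mp hS he
    rw [hQ1, Set.mem_symmDiff]
    tauto
  have h₀ := hsame _ (by simp [localEdges] : spokeE m k ∈ localEdges m k)
  have h₁ := hsame _ (by simp [localEdges] : spokeE m (k + 1) ∈ localEdges m k)
  have h₂ := hsame _ (by simp [localEdges] : rimE m k ∈ localEdges m k)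
  have hkQ : k ∈ boundaries m Q.1 := by
    simpa only [boundaries, Set.mem_ofPred_eq, h₀, h₁] using hk
  have hR : RimAgreesWithSpoke m Q.1 k ↔ RimAgreesWithSpoke m P.1 k := by
    rw [RimAgreesWithSpoke, RimAgreesWithSpoke, h₀, h₂]
  rw [positiveOrientation_iff_of_mem_boundaries hm hP hk,
    positiveOrientation_iff_of_mem_boundaries hm hQ hkQ,
    negativeOrientation_iff_of_mem_boundaries hm hP hk,
    negativeOrientation_iff_of_mem_boundaries hm hQ hkQ, hR]
  exact ⟨Iff.rfl, Iff.rfl⟩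

lemma exists_mem_boundaries_disjoint_localEdges_spokeE_rimE (hm : 3 ≤ m)
    (hP : IsWheelColoring m P) (hQ : IsWheelColoring m Q) {i j : ZMod m} (hj : j = i - 1 ∨ j = i)
    (hQ1 : Q.1 = P.1 ∆ {spokeE m i, rimE m j}) :
    ∃ k ∈ boundaries m P.1, Disjoint (localEdges m k) {spokeE m i, rimE m j} := by
  have : NeZero m := ⟨by omega⟩
  by_contra h
  have hsub : boundaries m P.1 ⊆ {i - 1, i} := by
    refine (boundaries_subset_touchedIndices h).trans ?_
    rw [touchedIndices_spokeE, touchedIndices_rimE hm, Set.union_subset_iff]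
    refine ⟨le_rfl, Set.singleton_subset_iff.mpr ?_⟩
    rcases hj with rfl | rfl <;> simp
  have hcard : ({i - 1, i} : Set (ZMod m)).ncard ≤ (boundaries m P.1).ncard :=
    (Set.ncard_insert_le _ _).trans (by rw [Set.ncard_singleton]; exact hP.two_le_intervalCount)
  refine boundaries_ne_of_symmDiff hQ hQ1 ?_
  rw [Set.pair_comm, boundaries_insert_rimE, boundaries_singleton_spokeE hm]
  exact Set.eq_of_subset_of_ncard_le hsub hcard

lemma ncard_touchedIndices_spokeE_le (a : ZMod m) :
    (touchedIndices m (spokeE m a)).ncard ≤ 2 := by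
  rw [touchedIndices_spokeE]
  exact (Set.ncard_insert_le _ _).trans (by simp)

lemma exists_eq_spokeE_of_four_le_ncard_touchedIndices (hm : 3 ≤ m) {e f : WheelEdge m}
    (he : e ∈ (wheelGraph m).edgeSet) (hf : f ∈ (wheelGraph m).edgeSet)
    (h4 : 4 ≤ (touchedIndices m e).ncard + (touchedIndices m f).ncard) :
    (∃ a, e = spokeE m a) ∧ ∃ b, f = spokeE m b := by
  have key : ∀ x ∈ (wheelGraph m).edgeSet,
      (∃ a, x = spokeE m a) ∨ (touchedIndices m x).ncard ≤ 1 := by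
    intro x hx
    rcases exists_eq_spokeE_or_rimE hx with h | ⟨a, rfl⟩
    · exact Or.inl h
    · exact Or.inr (by simp [touchedIndices_rimE hm])
  have hle : ∀ x ∈ (wheelGraph m).edgeSet, (touchedIndices m x).ncard ≤ 2 := by
    intro x hx
    rcases key x hx with ⟨a, rfl⟩ | h
    · exact ncard_touchedIndices_spokeE_le a
    · omega
  have := hle e he
  have := hle f hf
  rcases key e he with he' | he' <;> rcases key f hf with hf' | hf'
  · exact ⟨he', hf'⟩
  all_goals omega

lemma exists_mem_boundaries_disjoint_localEdges_of_four_le (hm : 3 ≤ m)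
    (hP : IsWheelColoring m P) (hQ : IsWheelColoring m Q) {e f : WheelEdge m}
    (he : e ∈ P.1) (hf : f ∈ P.2) (hQ1 : Q.1 = P.1 ∆ {e, f}) (h4 : 4 ≤ intervalCount m P) :
    ∃ k ∈ boundaries m P.1, Disjoint (localEdges m k) {e, f} := by
  have : NeZero m := ⟨by omega⟩
  rw [intervalCount_eq_ncard_boundaries] at h4
  by_contra h
  have hsub := boundaries_subset_touchedIndices h
  obtain ⟨⟨a, rfl⟩, ⟨b, rfl⟩⟩ := exists_eq_spokeE_of_four_le_ncard_touchedIndices hm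
    (hP.1.1 he) (hP.2.1.1 hf) (h4.trans ((Set.ncard_le_ncard hsub).trans (Set.ncard_union_le _ _)))
  have hpair := ncard_touchedIndices_spokeE_le (m := m)
  have hab : a ≠ b := fun hab => Set.disjoint_left.mp hP.2.2.1 he (hab ▸ hf)
  set Ta := touchedIndices m (spokeE m a)
  set Tb := touchedIndices m (spokeE m b)
  have hunion : boundaries m P.1 = Ta ∪ Tb :=
    Set.eq_of_subset_of_ncard_le hsub (by linarith [Set.ncard_union_le Ta Tb, hpair a, hpair b])
  have hdisj : Disjoint Ta Tb := by
    have := Set.ncard_union_add_ncard_inter Ta Tb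
    rw [← hunion] at this
    rw [Set.disjoint_iff_inter_eq_empty, ← Set.ncard_eq_zero]
    linarith [hpair a, hpair b]
  refine boundaries_ne_of_symmDiff hQ hQ1 ?_
  have hS : ({spokeE m a, spokeE m b} : Set (WheelEdge m)) = {spokeE m a} ∆ {spokeE m b} := by
    rw [(Set.disjoint_singleton.mpr (spokeE_injective.ne hab)).symmDiff_eq_sup]
    rfl
  rw [hunion, hS, boundaries_symmDiff, boundaries_singleton_spokeE hm,
    boundaries_singleton_spokeE hm, ← touchedIndices_spokeE, ← touchedIndices_spokeE,
    hdisj.symmDiff_eq_sup]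
  rfl

lemma orientation_iff_of_exchange_spokeE_rimE (hm : 3 ≤ m) (hP : IsWheelColoring m P)
    {i j : ZMod m} (hj : j = i - 1 ∨ j = i)
    (hQ : IsWheelColoring m (P.1 ∆ {spokeE m i, rimE m j}, P.2 ∆ {spokeE m i, rimE m j})) :
    (PositiveOrientation m P ↔
        PositiveOrientation m (P.1 ∆ {spokeE m i, rimE m j}, P.2 ∆ {spokeE m i, rimE m j})) ∧
      (NegativeOrientation m P ↔
        NegativeOrientation m
          (P.1 ∆ {spokeE m i, rimE m j}, P.2 ∆ {spokeE m i, rimE m j})) := by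
  obtain ⟨k, hk, hS⟩ := exists_mem_boundaries_disjoint_localEdges_spokeE_rimE hm hP hQ hj rfl
  exact orientation_iff_of_disjoint_localEdges hm hP hQ rfl hk hS

end Exchanges

section Sequences

variable {m : ℕ} {P Q : Set (WheelEdge m) × Set (WheelEdge m)}

lemma insert_sdiff_singleton_eq_symmDiff {α : Type*} {A : Set α} {e f : α} (he : e ∈ A)
    (hf : f ∉ A) : insert f (A \ {e}) = A ∆ {e, f} := by
  ext x
  simp only [Set.mem_insert_iff, Set.mem_sdiff, Set.mem_singleton_iff, Set.mem_symmDiff]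
  by_cases hxe : x = e <;> by_cases hxf : x = f <;> simp_all

lemma WStep.orientation_iff (hm : 3 ≤ m) (hP : IsWheelColoring m P) (hPQ : WStep m P Q)
    (h2 : intervalCount m P ≠ 2) :
    IsWheelColoring m Q ∧ (PositiveOrientation m P ↔ PositiveOrientation m Q) ∧
      (NegativeOrientation m P ↔ NegativeOrientation m Q) := by
  have : NeZero m := ⟨by omega⟩
  obtain ⟨e, f, he, hf, hQ1, -, hQ⟩ := hPQ
  rw [insert_sdiff_singleton_eq_symmDiff he ((hP.mem_snd_iff (hP.2.1.1 hf)).mp hf)] at hQ1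
  have h4 : 4 ≤ intervalCount m P := by
    obtain ⟨c, hc⟩ := even_ncard_boundaries (m := m) P.1
    have := hP.two_le_intervalCount
    rw [intervalCount_eq_ncard_boundaries] at h2 this ⊢
    omega
  obtain ⟨k, hk, hS⟩ :=
    exists_mem_boundaries_disjoint_localEdges_of_four_le hm hP hQ he hf hQ1 h4
  exact ⟨hQ, orientation_iff_of_disjoint_localEdges hm hP hQ hQ1 hk hS⟩

lemma exists_intervalCount_eq_two_of_isChain (hm : 3 ≤ m)
    {P₁ P₂ : Set (WheelEdge m) × Set (WheelEdge m)} (h₁ : IsWheelColoring m P₁)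
    (hdiff : DifferentOrientation m P₁ P₂)
    {l : List (Set (WheelEdge m) × Set (WheelEdge m))} (hl : l.IsChain (WStep m))
    (hhead : l.head? = some P₁) (hlast : l.getLast? = some P₂) :
    ∃ Q ∈ l, intervalCount m Q = 2 := by
  by_contra! h
  have key : ∀ Q ∈ l, IsWheelColoring m Q ∧
      (PositiveOrientation m P₁ ↔ PositiveOrientation m Q) ∧
      (NegativeOrientation m P₁ ↔ NegativeOrientation m Q) := by
    refine (hl.imp_of_mem_imp (S := fun Q R => WStep m Q R ∧ intervalCount m Q ≠ 2)
      fun Q _ hQ _ hQR => ⟨hQR, h Q hQ⟩).induction _ _ ?_ ?_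
    · rintro Q R ⟨hQR, hQ2⟩ ⟨hQ, hpos, hneg⟩
      obtain ⟨hR, hpos', hneg'⟩ := hQR.orientation_iff hm hQ hQ2
      exact ⟨hR, hpos.trans hpos', hneg.trans hneg'⟩
    · intro hne
      obtain rfl : l.head hne = P₁ :=
        Option.some_injective _ ((List.head?_eq_some_head hne).symm.trans hhead)
      exact ⟨h₁, Iff.rfl, Iff.rfl⟩
  obtain ⟨-, hpos, hneg⟩ := key P₂ (List.mem_of_getLast? hlast)
  rcases hdiff with ⟨hp, hn⟩ | ⟨hn, hp⟩
  · exact h₁.not_positiveOrientation_and_negativeOrientation hm ⟨hp, hneg.mpr hn⟩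
  · exact h₁.not_positiveOrientation_and_negativeOrientation hm ⟨hpos.mpr hp, hn⟩

end Sequences

/-- Exchanging a spoke `e` with its rim edge `φ₋ e` does not reverse the orientation of a
wheel coloring (stated for both orientations: for a positive coloring `φ₋ (spoke i)` is
`rim (i-1)`, for a negative one it is `rim i`); consequently, if colorings `P₁` and `P₂`
have different orientations, any sequence of feasible symmetric exchanges transforming
`P₁` into `P₂` must pass through a coloring with exactly two intervals. -/
theorem stmt10 (m : ℕ) (hm : 3 ≤ m) :
    (∀ (P : Set (Sym2 (Option (ZMod m))) × Set (Sym2 (Option (ZMod m)))) (i : ZMod m),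
      IsWheelColoring m P → PositiveOrientation m P →
      IsWheelColoring m
        (P.1 ∆ {spokeE m i, rimE m (i - 1)}, P.2 ∆ {spokeE m i, rimE m (i - 1)}) →
      PositiveOrientation m
        (P.1 ∆ {spokeE m i, rimE m (i - 1)}, P.2 ∆ {spokeE m i, rimE m (i - 1)})) ∧
    (∀ (P : Set (Sym2 (Option (ZMod m))) × Set (Sym2 (Option (ZMod m)))) (i : ZMod m),
      IsWheelColoring m P → NegativeOrientation m P →
      IsWheelColoring m (P.1 ∆ {spokeE m i, rimE m i}, P.2 ∆ {spokeE m i, rimE m i}) →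
      NegativeOrientation m
        (P.1 ∆ {spokeE m i, rimE m i}, P.2 ∆ {spokeE m i, rimE m i})) ∧
    (∀ (P₁ P₂ : Set (Sym2 (Option (ZMod m))) × Set (Sym2 (Option (ZMod m)))),
      IsWheelColoring m P₁ → IsWheelColoring m P₂ → DifferentOrientation m P₁ P₂ →
      ∀ l : List (Set (Sym2 (Option (ZMod m))) × Set (Sym2 (Option (ZMod m)))),
        l.Chain' (WStep m) → l.head? = some P₁ → l.getLast? = some P₂ →
        ∃ Q ∈ l, intervalCount m Q = 2) := by
  refine ⟨fun P i hP hpos hQ => ?_, fun P i hP hneg hQ => ?_,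
    fun P₁ P₂ h₁ _ hdiff l hl hhead hlast => ?_⟩
  · exact (orientation_iff_of_exchange_spokeE_rimE hm hP (Or.inl rfl) hQ).1.mp hpos
  · exact (orientation_iff_of_exchange_spokeE_rimE hm hP (Or.inr rfl) hQ).2.mp hneg
  · exact exists_intervalCount_eq_two_of_isChain hm h₁ hdiff hl hhead hlast
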